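/- arXiv:2409.09364 — 5 statements merged into one kernel-verified Lean document; each statement's English description precedes it below -/
import Mathlib

section
/- Let n ≥ 2 and n_r be natural numbers with n_r ≤ n. Let (Z_t)_{t∈ℕ} be an integrable process adapted to a filtration (F_t) on a probability space, taking values in {0, 1, …, n − n_r}, such that for every t, almost surely: P(Z_{t+1} = Z_t + 1 | F_t) = (n − Z_t − n_r)·Z_t / (n(n−1)), P(Z_{t+1} = Z_t − 1 | F_t) = Z_t·(n − Z_t) / (n(n−1)), and P(Z_{t+1} = Z_t | F_t) = 1 − (n − Z_t − n_r)·Z_t/(n(n−1)) − Z_t·(n − Z_t)/(n(n−1)). Then for every t, E[Z_{t+1} | F_t] = Z_t·(1 − n_r/(n(n−1))) almost surely; consequently E[Z_{t+1} − Z_t] = −n_r·E[Z_t]/(n(n−1)) and (Z_t)_{t≥0} is a supermartingale. In particular, if n_r = 0 then (Z_t) is a martingale. -/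
open MeasureTheory ProbabilityTheory

/-!
Up to a null set, the three events "up", "down" and "stay" partition `Ω`: they are disjoint
and their conditional probabilities add up to `1`, and conditional expectation is strictly
monotone. Hence `Z (t+1) = Z t + 1_up - 1_down` a.s., and taking conditional expectations
gives the drift `p_up - p_down = - n_r Z t / (n (n-1))`. Since `Z ≥ 0`, multiplying by
`1 - n_r / (n (n-1)) ≤ 1` can only decrease `Z t`.
-/

section

variable {Ω : Type*} {m m0 : MeasurableSpace Ω} {μ : Measure Ω}

theorem ae_eq_of_ae_le_of_condExp_ae_eq (hm : m ≤ m0) [SigmaFinite (μ.trim hm)]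
    {f g : Ω → ℝ} (hf : Integrable f μ) (hg : Integrable g μ) (hfg : f ≤ᵐ[μ] g)
    (h : μ[f | m] =ᵐ[μ] μ[g | m]) : f =ᵐ[μ] g := by
  rw [← integral_eq_iff_of_ae_le hf hg hfg, ← integral_condExp hm, integral_congr_ae h,
    integral_condExp hm]

theorem ae_mem_of_condExp_indicator_ae_eq_one (hm : m ≤ m0) [IsFiniteMeasure μ] {s : Set Ω}
    (hs : MeasurableSet s) (h : μ[s.indicator (fun _ ↦ (1 : ℝ)) | m] =ᵐ[μ] 1) :
    ∀ᵐ ω ∂μ, ω ∈ s := by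
  have h_one : s.indicator (fun _ ↦ (1 : ℝ)) =ᵐ[μ] 1 :=
    ae_eq_of_ae_le_of_condExp_ae_eq hm ((integrable_const 1).indicator hs) (integrable_const 1)
      (ae_of_all _ (Set.indicator_le_self' fun _ _ ↦ zero_le_one))
      (h.trans (condExp_const (μ := μ) hm (1 : ℝ)).symm.eventuallyEq)
  filter_upwards [h_one] with ω hω using (Set.indicator_eq_one_iff_mem ℝ).1 hω

theorem condExp_ae_eq_add_sub_of_condExp_indicator_step (hm : m ≤ m0) [IsFiniteMeasure μ]
    {X Y p q : Ω → ℝ} (hX : Measurable[m] X) (hXi : Integrable X μ) (hY : Measurable Y)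
    (hup : μ[{ω | Y ω = X ω + 1}.indicator (fun _ ↦ 1) | m] =ᵐ[μ] p)
    (hdown : μ[{ω | Y ω = X ω - 1}.indicator (fun _ ↦ 1) | m] =ᵐ[μ] q)
    (hstay : μ[{ω | Y ω = X ω}.indicator (fun _ ↦ 1) | m] =ᵐ[μ] fun ω ↦ 1 - p ω - q ω) :
    μ[Y | m] =ᵐ[μ] fun ω ↦ X ω + p ω - q ω := by
  set A := {ω | Y ω = X ω + 1}
  set B := {ω | Y ω = X ω - 1}
  set C := {ω | Y ω = X ω}
  have hXm : Measurable X := hX.mono hm le_rfl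
  have hA : MeasurableSet A := measurableSet_eq_fun hY (hXm.add_const 1)
  have hB : MeasurableSet B := measurableSet_eq_fun hY (hXm.sub_const 1)
  have hC : MeasurableSet C := measurableSet_eq_fun hY hXm
  have hIA : Integrable (A.indicator fun _ ↦ (1 : ℝ)) μ := (integrable_const 1).indicator hA
  have hIB : Integrable (B.indicator fun _ ↦ (1 : ℝ)) μ := (integrable_const 1).indicator hB
  have hIC : Integrable (C.indicator fun _ ↦ (1 : ℝ)) μ := (integrable_const 1).indicator hC
  have hAB : Disjoint A B := Set.disjoint_left.2 fun ω (ha : Y ω = _) (hb : Y ω = _) ↦ by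
    linarith
  have hABC : Disjoint (A ∪ B) C := Set.disjoint_left.2 fun ω hab (hc : Y ω = _) ↦ by
    rcases hab with (ha : Y ω = _) | (hb : Y ω = _) <;> linarith
  have h_cover : ∀ᵐ ω ∂μ, ω ∈ A ∪ B ∪ C := by
    refine ae_mem_of_condExp_indicator_ae_eq_one hm ((hA.union hB).union hC) ?_
    have h_sum : (A ∪ B ∪ C).indicator (fun _ ↦ (1 : ℝ))
        = A.indicator (fun _ ↦ 1) + B.indicator (fun _ ↦ 1) + C.indicator (fun _ ↦ 1) := by
      rw [Set.indicator_union_of_disjoint hABC, Set.indicator_union_of_disjoint hAB]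
      rfl
    filter_upwards [condExp_add (hIA.add hIB) hIC m, condExp_add hIA hIB m, hup, hdown, hstay]
      with ω h₁ h₂ hu hd hs
    rw [h_sum, h₁, Pi.add_apply, h₂, Pi.add_apply, hu, hd, hs, Pi.one_apply]
    ring
  have hY_eq : Y =ᵐ[μ] X + A.indicator (fun _ ↦ 1) - B.indicator (fun _ ↦ 1) := by
    filter_upwards [h_cover] with ω hω
    rcases hω with (ha | hb) | hc
    · simp [ha, Set.disjoint_left.1 hAB ha, show Y ω = X ω + 1 from ha]
    · simp [hb, Set.disjoint_right.1 hAB hb, show Y ω = X ω - 1 from hb]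
    · have hab := Set.disjoint_right.1 hABC hc
      simp only [Set.mem_union, not_or] at hab
      simp [hab, show Y ω = X ω from hc]
  filter_upwards [condExp_congr_ae (m := m) hY_eq, condExp_sub (hXi.add hIA) hIB m,
    condExp_add hXi hIA m, hup, hdown] with ω hY h₁ h₂ hu hd
  rw [hY, h₁, Pi.sub_apply, h₂, Pi.add_apply,
    condExp_of_stronglyMeasurable hm hX.stronglyMeasurable hXi, hu, hd]

theorem supermartingale_of_condExp_succ_ae_eq_mul {ℱ : Filtration ℕ m0} [IsFiniteMeasure μ]
    {Z : ℕ → Ω → ℝ} {a : ℝ} (hadp : Adapted ℱ Z) (hint : ∀ t, Integrable (Z t) μ)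
    (hZ : ∀ t ω, 0 ≤ Z t ω) (ha : a ≤ 1) (h : ∀ t, μ[Z (t + 1) | ℱ t] =ᵐ[μ] fun ω ↦ Z t ω * a) :
    Supermartingale Z ℱ μ :=
  supermartingale_nat hadp.stronglyAdapted hint fun t ↦ by
    filter_upwards [h t] with ω hω
    rw [hω]
    exact mul_le_of_le_one_right (hZ t ω) ha

end

theorem Nat.cast_mul_cast_sub_one_nonneg (n : ℕ) : 0 ≤ (n : ℝ) * (n - 1) := by
  rcases n with _ | n
  · simp
  · push_cast
    simp only [add_sub_cancel_right]
    positivity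

theorem stmt_5_general {Ω : Type*} {m0 : MeasurableSpace Ω} (μ : Measure Ω) [IsProbabilityMeasure μ]
    (ℱ : Filtration ℕ m0) (n n_r : ℕ)
    (Z : ℕ → Ω → ℝ) (hadp : Adapted ℱ Z) (hint : ∀ t, Integrable (Z t) μ)
    (hval : ∀ t ω, ∃ z : ℕ, z ≤ n - n_r ∧ Z t ω = z)
    (hup : ∀ t, μ[({ω | Z (t + 1) ω = Z t ω + 1}).indicator (fun _ => (1 : ℝ)) | ℱ t]
      =ᵐ[μ] fun ω => ((n : ℝ) - Z t ω - n_r) * Z t ω / (n * (n - 1)))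
    (hdown : ∀ t, μ[({ω | Z (t + 1) ω = Z t ω - 1}).indicator (fun _ => (1 : ℝ)) | ℱ t]
      =ᵐ[μ] fun ω => Z t ω * ((n : ℝ) - Z t ω) / (n * (n - 1)))
    (hstay : ∀ t, μ[({ω | Z (t + 1) ω = Z t ω}).indicator (fun _ => (1 : ℝ)) | ℱ t]
      =ᵐ[μ] fun ω => 1 - ((n : ℝ) - Z t ω - n_r) * Z t ω / (n * (n - 1))
        - Z t ω * ((n : ℝ) - Z t ω) / (n * (n - 1))) :
    (∀ t, μ[Z (t + 1) | ℱ t] =ᵐ[μ] fun ω => Z t ω * (1 - (n_r : ℝ) / (n * (n - 1))))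
    ∧ (∀ t, ∫ ω, (Z (t + 1) ω - Z t ω) ∂μ
        = -(n_r : ℝ) * (∫ ω, Z t ω ∂μ) / (n * (n - 1)))
    ∧ Supermartingale Z ℱ μ
    ∧ (n_r = 0 → Martingale Z ℱ μ) := by
  have h_drift : ∀ t, μ[Z (t + 1) | ℱ t]
      =ᵐ[μ] fun ω => Z t ω * (1 - (n_r : ℝ) / (n * (n - 1))) := fun t ↦ by
    filter_upwards [condExp_ae_eq_add_sub_of_condExp_indicator_step (ℱ.le t) (hadp t) (hint t)
      ((hadp (t + 1)).mono (ℱ.le _) le_rfl) (hup t) (hdown t) (hstay t)] with ω hω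
    rw [hω]
    ring
  have hZ : ∀ t ω, 0 ≤ Z t ω := fun t ω ↦ by
    obtain ⟨z, -, hz⟩ := hval t ω
    exact hz ▸ z.cast_nonneg
  refine ⟨h_drift, fun t ↦ ?_, ?_, fun h_zero ↦ ?_⟩
  · rw [integral_sub (hint (t + 1)) (hint t), ← integral_condExp (ℱ.le t),
      integral_congr_ae (h_drift t), integral_mul_const]
    ring
  · refine supermartingale_of_condExp_succ_ae_eq_mul hadp hint hZ (sub_le_self _ ?_) h_drift
    exact div_nonneg n_r.cast_nonneg n.cast_mul_cast_sub_one_nonneg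
  · refine martingale_nat hadp.stronglyAdapted hint fun t ↦ ?_
    filter_upwards [h_drift t] with ω hω
    simp [hω, h_zero]

/-- Lemma 3.5: for the number `Z t` of agents holding opinion 1 in the asynchronous
`(n,k)` game with `n_r` rejectors and `n - n_r` random followers, given the game's
one-step conditional transition probabilities, one has
`E[Z (t+1) | ℱ t] = Z t (1 - n_r / (n (n-1)))` a.s., hence
`E[Z (t+1) - Z t] = - n_r E[Z t] / (n (n-1))`, `Z` is a supermartingale, and a
martingale when `n_r = 0`. -/
theorem stmt_5 {Ω : Type*} {m0 : MeasurableSpace Ω} (μ : Measure Ω) [IsProbabilityMeasure μ]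
    (ℱ : Filtration ℕ m0) (n n_r : ℕ) (hn : 2 ≤ n) (hr : n_r ≤ n)
    (Z : ℕ → Ω → ℝ) (hadp : Adapted ℱ Z) (hint : ∀ t, Integrable (Z t) μ)
    (hval : ∀ t ω, ∃ z : ℕ, z ≤ n - n_r ∧ Z t ω = z)
    (hup : ∀ t, μ[({ω | Z (t + 1) ω = Z t ω + 1}).indicator (fun _ => (1 : ℝ)) | ℱ t]
      =ᵐ[μ] fun ω => ((n : ℝ) - Z t ω - n_r) * Z t ω / (n * (n - 1)))
    (hdown : ∀ t, μ[({ω | Z (t + 1) ω = Z t ω - 1}).indicator (fun _ => (1 : ℝ)) | ℱ t]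
      =ᵐ[μ] fun ω => Z t ω * ((n : ℝ) - Z t ω) / (n * (n - 1)))
    (hstay : ∀ t, μ[({ω | Z (t + 1) ω = Z t ω}).indicator (fun _ => (1 : ℝ)) | ℱ t]
      =ᵐ[μ] fun ω => 1 - ((n : ℝ) - Z t ω - n_r) * Z t ω / (n * (n - 1))
        - Z t ω * ((n : ℝ) - Z t ω) / (n * (n - 1))) :
    (∀ t, μ[Z (t + 1) | ℱ t] =ᵐ[μ] fun ω => Z t ω * (1 - (n_r : ℝ) / (n * (n - 1))))
    ∧ (∀ t, ∫ ω, (Z (t + 1) ω - Z t ω) ∂μ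
        = -(n_r : ℝ) * (∫ ω, Z t ω ∂μ) / (n * (n - 1)))
    ∧ Supermartingale Z ℱ μ
    ∧ (n_r = 0 → Martingale Z ℱ μ) :=
  stmt_5_general μ ℱ n n_r Z hadp hint hval hup hdown hstay
end

section
/- Let n be a natural number, k ∈ Fin n, and let x, y : Fin n → Bool satisfy y j = x j for all j ≠ k. Then, with counts taken as integers, (Σ_{i,j ∈ Fin n} 1{x i ≠ x j}) − (Σ_{i,j ∈ Fin n} 1{y i ≠ y j}) = 2 · Σ_{j ∈ Fin n, j ≠ k} (1{x k ≠ x j} − 1{x k = x j}) · 1{x k ≠ y k}. -/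
open Finset

/-- Lemma 3.7: if only agent `k` may change its opinion between the profiles `x` and `y`,
then the decrement of the total pairwise disagreement is
`W(x) - W(y) = 2 ∑_{j ≠ k} (1{x k ≠ x j} - 1{x k = x j}) · 1{x k ≠ y k}`. -/
theorem stmt_6 (n : ℕ) (k : Fin n) (x y : Fin n → Bool)
    (h : ∀ j : Fin n, j ≠ k → y j = x j) :
    (∑ i : Fin n, ∑ j : Fin n, if x i ≠ x j then (1 : ℤ) else 0)
      - (∑ i : Fin n, ∑ j : Fin n, if y i ≠ y j then (1 : ℤ) else 0)
    = 2 * ∑ j ∈ Finset.univ.erase k,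
        ((if x k ≠ x j then (1 : ℤ) else 0) - (if x k = x j then (1 : ℤ) else 0))
          * (if x k ≠ y k then (1 : ℤ) else 0) := by
  by_cases hk : y k = x k
  · have hxy : y = x := funext fun j => by
      by_cases hj : j = k
      · rw [hj, hk]
      · exact h j hj
    simp [hxy]
  · have hne : x k ≠ y k := Ne.symm hk
    have hyk : y k = !x k := by cases hx : x k <;> cases hy : y k <;> simp_all
    simp only [if_pos hne, mul_one]
    set f : Fin n → Fin n → ℤ := fun i j => if x i ≠ x j then (1:ℤ) else 0 with hf
    set g : Fin n → Fin n → ℤ := fun i j => if y i ≠ y j then (1:ℤ) else 0 with hg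
    set d : Fin n → ℤ := fun j => (if x k ≠ x j then (1:ℤ) else 0) - (if x k = x j then (1:ℤ) else 0) with hd
    have hdsym : ∀ j ∈ Finset.univ.erase k, f j k - g j k = d j := by
      intro j hj
      have hjk : j ≠ k := Finset.ne_of_mem_erase hj
      simp only [hf, hg, hd, h j hjk, hyk]
      cases hx : x k <;> cases hxj : x j <;> simp
    have hrow : ∀ j ∈ Finset.univ.erase k, f k j - g k j = d j := by
      intro j hj
      have hjk : j ≠ k := Finset.ne_of_mem_erase hj
      simp only [hf, hg, hd, h j hjk, hyk]
      cases hx : x k <;> cases hxj : x j <;> simp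
    have hzero : ∀ i ∈ Finset.univ.erase k, ∀ j ∈ Finset.univ.erase k, f i j - g i j = 0 := by
      intro i hi j hj
      simp [hf, hg, h i (Finset.ne_of_mem_erase hi), h j (Finset.ne_of_mem_erase hj)]
    have expand : ∀ F : Fin n → Fin n → ℤ,
        (∑ i : Fin n, ∑ j : Fin n, F i j)
        = F k k + ∑ j ∈ Finset.univ.erase k, F k j
          + (∑ i ∈ Finset.univ.erase k, F i k
             + ∑ i ∈ Finset.univ.erase k, ∑ j ∈ Finset.univ.erase k, F i j) := by
      intro F
      rw [← Finset.add_sum_erase _ (fun i => ∑ j : Fin n, F i j) (Finset.mem_univ k),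
          ← Finset.add_sum_erase _ (F k) (Finset.mem_univ k), ← Finset.sum_add_distrib]
      congr 1
      refine Finset.sum_congr rfl fun i _ => ?_
      rw [← Finset.add_sum_erase _ (F i) (Finset.mem_univ k)]
    rw [expand f, expand g]
    have hfkk : f k k = 0 := by simp [hf]
    have hgkk : g k k = 0 := by simp [hg]
    have h1 : ∑ j ∈ Finset.univ.erase k, f k j - ∑ j ∈ Finset.univ.erase k, g k j
        = ∑ j ∈ Finset.univ.erase k, d j := by
      rw [← Finset.sum_sub_distrib]; exact Finset.sum_congr rfl hrow
    have h2 : ∑ i ∈ Finset.univ.erase k, f i k - ∑ i ∈ Finset.univ.erase k, g i k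
        = ∑ j ∈ Finset.univ.erase k, d j := by
      rw [← Finset.sum_sub_distrib]; exact Finset.sum_congr rfl hdsym
    have h3 : (∑ i ∈ Finset.univ.erase k, ∑ j ∈ Finset.univ.erase k, f i j)
        - ∑ i ∈ Finset.univ.erase k, ∑ j ∈ Finset.univ.erase k, g i j = 0 := by
      rw [← Finset.sum_sub_distrib]
      refine Finset.sum_eq_zero fun i hi => ?_
      rw [← Finset.sum_sub_distrib]
      exact Finset.sum_eq_zero fun j hj => hzero i hi j hj
    rw [hfkk, hgkk]
    linarith [h1, h2, h3]
end

section
/- Let n be a natural number, k ∈ Fin n, and let x, y : Fin n → Bool satisfy y j = x j for all j ≠ k. Assume that the new opinion of agent k is a (weak) majority opinion among the other agents, i.e., card{j ≠ k : x j = y k} ≥ card{j ≠ k : x j ≠ y k}. Then Σ_{i,j ∈ Fin n} 1{y i ≠ y j} ≤ Σ_{i,j ∈ Fin n} 1{x i ≠ x j}. -/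
/-!
Split the double sum at agent `k`: pairs avoiding `k` contribute the same before and after the
move, and pairs involving `k` contribute twice the number of other agents disagreeing with `k`.
The majority hypothesis makes that number go down: with two opinions, if `k` switches, the agents
disagreeing with its old opinion are exactly the holders of the new one.
-/

open Finset

namespace Opinion

theorem card_ne_le_card_ne_of_majority {ι : Type*} {s : Finset ι} (x : ι → Bool) (b : Bool)
    (hmaj : #{j ∈ s | x j ≠ b} ≤ #{j ∈ s | x j = b}) (c : Bool) :
    #{j ∈ s | x j ≠ b} ≤ #{j ∈ s | x j ≠ c} := by
  obtain rfl | hcb := eq_or_ne c b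
  · exact le_rfl
  · have hswap : ∀ a : Bool, a ≠ c ↔ a = b := by
      intro a; cases a <;> cases b <;> cases c <;> simp_all
    simpa only [hswap] using hmaj

variable {ι α : Type*} [Fintype ι] [DecidableEq ι] [DecidableEq α]

def disagreement (z : ι → α) : ℤ :=
  ∑ i, ∑ j, if z i ≠ z j then 1 else 0

theorem disagreement_eq_sum_erase_add (z : ι → α) (k : ι) :
    disagreement z = (∑ i ∈ univ.erase k, ∑ j ∈ univ.erase k, if z i ≠ z j then 1 else 0)
      + 2 * #{j ∈ univ.erase k | z j ≠ z k} := by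
  have hk : k ∈ (univ : Finset ι) := mem_univ k
  have hrow : ∀ i, (∑ j, if z i ≠ z j then (1 : ℤ) else 0)
      = (if z i ≠ z k then 1 else 0) + ∑ j ∈ univ.erase k, if z i ≠ z j then 1 else 0 :=
    fun i => (add_sum_erase _ _ hk).symm
  have hcol : (∑ j ∈ univ.erase k, if z k ≠ z j then (1 : ℤ) else 0)
      = #{j ∈ univ.erase k | z j ≠ z k} := by
    simp only [ne_comm (a := z k), natCast_card_filter]
  simp only [disagreement, hrow, sum_add_distrib]
  rw [← add_sum_erase _ (fun i => ∑ j ∈ univ.erase k, if z i ≠ z j then (1 : ℤ) else 0) hk,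
    ← add_sum_erase _ (fun i => if z i ≠ z k then (1 : ℤ) else 0) hk, hcol, natCast_card_filter]
  simp only [ne_eq, not_true_eq_false, if_false]
  ring

theorem disagreement_le_of_eq_off (x y : ι → α) (k : ι) (h : ∀ j, j ≠ k → y j = x j)
    (hle : #{j ∈ univ.erase k | x j ≠ y k} ≤ #{j ∈ univ.erase k | x j ≠ x k}) :
    disagreement y ≤ disagreement x := by
  have hoff : ∀ j ∈ univ.erase k, y j = x j := fun j hj => h j (ne_of_mem_erase hj)
  have hrest : (∑ i ∈ univ.erase k, ∑ j ∈ univ.erase k, if y i ≠ y j then (1 : ℤ) else 0)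
      = ∑ i ∈ univ.erase k, ∑ j ∈ univ.erase k, if x i ≠ x j then 1 else 0 :=
    sum_congr rfl fun i hi => sum_congr rfl fun j hj => by rw [hoff i hi, hoff j hj]
  have hk : #{j ∈ univ.erase k | y j ≠ y k} = #{j ∈ univ.erase k | x j ≠ y k} :=
    congrArg card (filter_congr fun j hj => by rw [hoff j hj])
  rw [disagreement_eq_sum_erase_add y k, disagreement_eq_sum_erase_add x k, hrest, hk]
  gcongr

end Opinion

open Opinion in
/-- If only agent `k` may change its opinion between the profiles `x` and `y`, and the new
opinion `y k` is a weak majority among the other agents, then the total pairwise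
disagreement does not increase. -/
theorem stmt_7 (n : ℕ) (k : Fin n) (x y : Fin n → Bool)
    (h : ∀ j : Fin n, j ≠ k → y j = x j)
    (hmaj : ((Finset.univ.erase k).filter (fun j => x j ≠ y k)).card
      ≤ ((Finset.univ.erase k).filter (fun j => x j = y k)).card) :
    (∑ i : Fin n, ∑ j : Fin n, if y i ≠ y j then (1 : ℤ) else 0)
      ≤ ∑ i : Fin n, ∑ j : Fin n, if x i ≠ x j then (1 : ℤ) else 0 :=
  disagreement_le_of_eq_off x y k h (card_ne_le_card_ne_of_majority x (y k) hmaj (x k))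
end

section
/- Let n be a natural number, k ∈ Fin n, and let x, y : Fin n → Bool satisfy y j = x j for all j ≠ k. Assume that the new opinion of agent k is a (weak) minority opinion among the other agents, i.e., card{j ≠ k : x j = y k} ≤ card{j ≠ k : x j ≠ y k}. Then Σ_{i,j ∈ Fin n} 1{y i ≠ y j} ≥ Σ_{i,j ∈ Fin n} 1{x i ≠ x j}. -/
/-!
Only the pairs involving agent `k` can change. Each disagreement of `k` with an agent `j ≠ k` is
counted twice, so the total changes by twice the change in the number of agents `j ≠ k` that
disagree with `k`. That number becomes `#{j ≠ k | x j ≠ y k}`; it was either the same (if `k`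
kept its opinion) or `#{j ≠ k | x j = y k}` (if `k` switched), which is no larger by the minority
hypothesis.
-/

open Finset

section Disagreement

variable {ι α : Type*} [DecidableEq α]

def disagreement (s : Finset ι) (z : ι → α) : ℤ :=
  ∑ i ∈ s, ∑ j ∈ s, if z i ≠ z j then 1 else 0

theorem disagreement_congr {s : Finset ι} {z z' : ι → α} (h : ∀ j ∈ s, z j = z' j) :
    disagreement s z = disagreement s z' := by
  unfold disagreement
  refine sum_congr rfl fun i hi => sum_congr rfl fun j hj => ?_
  rw [h i hi, h j hj]

theorem disagreement_eq_erase_add [DecidableEq ι] {s : Finset ι} {k : ι} (hk : k ∈ s) (z : ι → α) :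
    disagreement s z = disagreement (s.erase k) z + 2 * #{j ∈ s.erase k | z j ≠ z k} := by
  have split (f : ι → ℤ) : ∑ j ∈ s, f j = ∑ j ∈ s.erase k, f j + f k :=
    (sum_erase_add s f hk).symm
  have row_k : #{j ∈ s.erase k | z k ≠ z j} = #{j ∈ s.erase k | z j ≠ z k} := by
    simp only [ne_comm]
  unfold disagreement
  simp only [split, sum_add_distrib, ne_self_iff_false, if_false, add_zero, sum_boole,
    row_k]
  ring

end Disagreement

theorem Bool.card_filter_ne_le_of_card_filter_eq_le {ι : Type*} {t : Finset ι} {x : ι → Bool}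
    {b : Bool} (hmin : #{j ∈ t | x j = b} ≤ #{j ∈ t | x j ≠ b}) (a : Bool) :
    #{j ∈ t | x j ≠ a} ≤ #{j ∈ t | x j ≠ b} := by
  by_cases hab : a = b
  · rw [hab]
  · have hflip : ∀ j, x j ≠ a ↔ x j = b := by
      intro j; cases a <;> cases b <;> simp_all
    simpa only [hflip] using hmin

/-- If only agent `k` may change its opinion between the profiles `x` and `y`, and the new
opinion `y k` is a weak minority among the other agents, then the total pairwise
disagreement does not decrease. -/
theorem stmt_8 (n : ℕ) (k : Fin n) (x y : Fin n → Bool)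
    (h : ∀ j : Fin n, j ≠ k → y j = x j)
    (hmin : ((Finset.univ.erase k).filter (fun j => x j = y k)).card
      ≤ ((Finset.univ.erase k).filter (fun j => x j ≠ y k)).card) :
    (∑ i : Fin n, ∑ j : Fin n, if x i ≠ x j then (1 : ℤ) else 0)
      ≤ ∑ i : Fin n, ∑ j : Fin n, if y i ≠ y j then (1 : ℤ) else 0 := by
  have hyx : ∀ j ∈ univ.erase k, y j = x j := fun j hj => h j (ne_of_mem_erase hj)
  have hcross : #{j ∈ univ.erase k | x j ≠ x k} ≤ #{j ∈ univ.erase k | y j ≠ y k} := by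
    have hy : #{j ∈ univ.erase k | y j ≠ y k} = #{j ∈ univ.erase k | x j ≠ y k} := by
      rw [filter_congr fun j hj => by rw [hyx j hj]]
    rw [hy]
    exact Bool.card_filter_ne_le_of_card_filter_eq_le hmin (x k)
  change disagreement univ x ≤ disagreement univ y
  rw [disagreement_eq_erase_add (mem_univ k) x, disagreement_eq_erase_add (mem_univ k) y,
    disagreement_congr hyx]
  gcongr
end

section
/- Let n, n_c, n_r be natural numbers with n_c + n_r ≤ n. On a probability space, let (x_i)_{i ∈ Fin n} be mutually independent Bool-valued random variables such that x_i = false almost surely for i in a set R of size n_r, x_i = true almost surely for i in a set C of size n_c disjoint from R, and P(x_i = true) = 1/2 for the remaining n − n_c − n_r indices. Then E[Σ_{i,j ∈ Fin n} 1{x_i ≠ x_j}] = (1/2)·[(n − n_c − n_r)(n + n_c + n_r − 1) + 4·n_c·n_r]. -/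
open MeasureTheory ProbabilityTheory Finset

/-!
For independent Boolean opinions `x i`, `x j` with `p k = P(x k = true)`, the pair disagrees
with probability `p i (1 - p j) + p j (1 - p i)`. Summing over all ordered pairs and removing the
diagonal, the expected disagreement is `2 S (n - S) - 2 ∑ p i (1 - p i)` with `S = ∑ p i`. Here
`p` is `0` on the rejectors, `1` on the consentors and `1/2` on the `f = n - n_c - n_r` followers,
so `S = n_c + f / 2` and `∑ p i (1 - p i) = f / 4`.
-/

section

variable {Ω : Type*} {m0 : MeasurableSpace Ω} {μ : Measure Ω}

theorem ProbabilityTheory.IndepFun.measureReal_ne [IsProbabilityMeasure μ] {X Y : Ω → Bool}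
    (hX : Measurable X) (hY : Measurable Y) (h : IndepFun X Y μ) :
    μ.real {ω | X ω ≠ Y ω} = μ.real {ω | X ω = true} * (1 - μ.real {ω | Y ω = true})
      + μ.real {ω | Y ω = true} * (1 - μ.real {ω | X ω = true}) := by
  have hfalse : ∀ Z : Ω → Bool, Z ⁻¹' {false} = (Z ⁻¹' {true})ᶜ := fun Z => by ext; simp
  have hsplit : {ω | X ω ≠ Y ω}
      = X ⁻¹' {true} ∩ (Y ⁻¹' {true})ᶜ ∪ (X ⁻¹' {true})ᶜ ∩ Y ⁻¹' {true} := by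
    ext ω
    simp only [Set.mem_ofPred_eq, Set.mem_union, Set.mem_inter_iff, Set.mem_compl_iff,
      Set.mem_preimage, Set.mem_singleton_iff]
    cases X ω <;> cases Y ω <;> decide
  have hdisj : Disjoint (X ⁻¹' {true} ∩ (Y ⁻¹' {true})ᶜ) ((X ⁻¹' {true})ᶜ ∩ Y ⁻¹' {true}) :=
    Set.disjoint_left.mpr fun _ h₁ h₂ => h₂.1 h₁.1
  have hmul (s t : Set Bool) :
      μ.real (X ⁻¹' s ∩ Y ⁻¹' t) = μ.real (X ⁻¹' s) * μ.real (Y ⁻¹' t) := by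
    simp [measureReal_def, h.measure_inter_preimage_eq_mul s t trivial trivial]
  have hXm : MeasurableSet (X ⁻¹' {true}) := hX trivial
  have hYm : MeasurableSet (Y ⁻¹' {true}) := hY trivial
  rw [hsplit, measureReal_union hdisj (hXm.compl.inter hYm), ← hfalse, ← hfalse, hmul, hmul,
    hfalse, hfalse, measureReal_compl hXm, measureReal_compl hYm, probReal_univ]
  simp only [Set.preimage, Set.mem_singleton_iff]
  ring

theorem indicator_setOf_ne_eq_ite (X Y : Ω → Bool) :
    {ω | X ω ≠ Y ω}.indicator 1 = fun ω => if X ω ≠ Y ω then (1 : ℝ) else 0 := by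
  ext ω
  simp [Set.indicator_apply]

theorem integrable_ite_ne [IsFiniteMeasure μ] {X Y : Ω → Bool} (hX : Measurable X)
    (hY : Measurable Y) : Integrable (fun ω => if X ω ≠ Y ω then (1 : ℝ) else 0) μ :=
  indicator_setOf_ne_eq_ite X Y ▸ (integrable_const 1).indicator (measurableSet_eq_fun hX hY).compl

theorem integral_ite_ne {X Y : Ω → Bool} (hX : Measurable X) (hY : Measurable Y) :
    ∫ ω, (if X ω ≠ Y ω then (1 : ℝ) else 0) ∂μ = μ.real {ω | X ω ≠ Y ω} := by
  rw [← indicator_setOf_ne_eq_ite]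
  exact integral_indicator_one (measurableSet_eq_fun hX hY).compl

theorem integral_sum_sum_ite_ne [IsProbabilityMeasure μ] {ι : Type*} [Fintype ι]
    {x : ι → Ω → Bool} (hmeas : ∀ i, Measurable (x i))
    (hind : Pairwise fun i j => IndepFun (x i) (x j) μ)
    {p : ι → ℝ} (hp : ∀ i, μ.real {ω | x i ω = true} = p i) :
    ∫ ω, (∑ i, ∑ j, if x i ω ≠ x j ω then (1 : ℝ) else 0) ∂μ
      = 2 * (∑ i, p i) * (Fintype.card ι - ∑ i, p i) - 2 * ∑ i, p i * (1 - p i) := by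
  classical
  have hpair (i j : ι) : μ.real {ω | x i ω ≠ x j ω}
      = p i * (1 - p j) + p j * (1 - p i) - if i = j then 2 * (p i * (1 - p i)) else 0 := by
    rcases eq_or_ne i j with rfl | hij
    · simp only [ne_eq, not_true_eq_false, Set.ofPred_false, measureReal_empty, ↓reduceIte]
      ring
    · rw [(hind hij).measureReal_ne (hmeas i) (hmeas j), hp, hp, if_neg hij, sub_zero]
  have hint (i j : ι) := integrable_ite_ne (μ := μ) (hmeas i) (hmeas j)
  rw [integral_finsetSum _ fun i _ => integrable_finsetSum _ fun j _ => hint i j]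
  simp_rw [integral_finsetSum _ fun j _ => hint _ j, integral_ite_ne (hmeas _) (hmeas _), hpair]
  simp only [sum_sub_distrib, sum_add_distrib, ← mul_sum, sum_const, card_univ, nsmul_eq_mul,
    mul_one, ← sum_mul, sum_ite_eq, mem_univ, ↓reduceIte]
  ring

theorem measureReal_setOf_eq_true_of_ae_eq [IsProbabilityMeasure μ] {X : Ω → Bool} {b : Bool}
    (h : ∀ᵐ ω ∂μ, X ω = b) : μ.real {ω | X ω = true} = b.toNat := by
  rw [measureReal_congr (s := {ω | X ω = true}) (t := {_ω | b = true})
    (h.mono fun _ hω => congrArg (· = true) hω)]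
  cases b <;> simp

end

theorem Finset.sum_eq_of_const_on_parts {ι M : Type*} [Fintype ι] [DecidableEq ι] [Ring M]
    {s t : Finset ι} (hst : Disjoint s t) {f : ι → M} {a b c : M} (ha : ∀ i ∈ s, f i = a)
    (hb : ∀ i ∈ t, f i = b) (hc : ∀ i, i ∉ s → i ∉ t → f i = c) :
    ∑ i, f i = #s * a + #t * b + (Fintype.card ι - #s - #t) * c := by
  have hcard : (#(s ∪ t)ᶜ : M) = Fintype.card ι - #s - #t := by
    rw [card_compl, Nat.cast_sub (card_le_univ _), card_union_of_disjoint hst, Nat.cast_add,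
      sub_add_eq_sub_sub]
  rw [← sum_add_sum_compl (s ∪ t), sum_union hst, sum_congr rfl ha, sum_congr rfl hb,
    sum_congr rfl fun i hi => hc i (by simp_all) (by simp_all), sum_const, sum_const, sum_const,
    ← hcard]
  simp [nsmul_eq_mul]

theorem stmt_11_general {Ω : Type*} {m0 : MeasurableSpace Ω} (μ : Measure Ω) [IsProbabilityMeasure μ]
    (n n_c n_r : ℕ)
    (x : Fin n → Ω → Bool) (hmeas : ∀ i, Measurable (x i))
    (hind : iIndepFun (m := fun _ => ⊤) x μ)
    (R C : Finset (Fin n)) (hR : R.card = n_r) (hC : C.card = n_c) (hRC : Disjoint R C)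
    (hr : ∀ i ∈ R, ∀ᵐ ω ∂μ, x i ω = false)
    (hc : ∀ i ∈ C, ∀ᵐ ω ∂μ, x i ω = true)
    (hf : ∀ i, i ∉ R → i ∉ C → μ {ω | x i ω = true} = 1 / 2) :
    ∫ ω, (∑ i : Fin n, ∑ j : Fin n, if x i ω ≠ x j ω then (1 : ℝ) else 0) ∂μ
      = (((n : ℝ) - n_c - n_r) * ((n : ℝ) + n_c + n_r - 1) + 4 * n_c * n_r) / 2 := by
  set q : Fin n → ℝ := fun i => μ.real {ω | x i ω = true}
  have hqR (i) (hi : i ∈ R) : q i = 0 := by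
    simpa using measureReal_setOf_eq_true_of_ae_eq (hr i hi)
  have hqC (i) (hi : i ∈ C) : q i = 1 := by
    simpa using measureReal_setOf_eq_true_of_ae_eq (hc i hi)
  have hqF (i) (hiR : i ∉ R) (hiC : i ∉ C) : q i = 1 / 2 := by
    simp [q, measureReal_def, hf i hiR hiC]
  rw [integral_sum_sum_ite_ne hmeas (fun i j hij => hind.indepFun hij) (fun i => rfl),
    sum_eq_of_const_on_parts hRC hqR hqC hqF,
    sum_eq_of_const_on_parts hRC (f := fun i => q i * (1 - q i)) (a := 0) (b := 0) (c := 1 / 4)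
      (fun i hi => by simp [hqR i hi]) (fun i hi => by simp [hqC i hi])
      (fun i hiR hiC => by norm_num [hqF i hiR hiC]), Fintype.card_fin, hR, hC]
  ring

/-- Computation of `E[W 0]` in the proof of Theorem 2: with `n_r` rejectors (opinion 0),
`n_c` consentors (opinion 1) and `n - n_c - n_r` independent Bernoulli(1/2) opinions, the
expected total pairwise disagreement (over ordered pairs) equals
`((n - n_c - n_r)(n + n_c + n_r - 1) + 4 n_c n_r) / 2`. -/
theorem stmt_11 {Ω : Type*} {m0 : MeasurableSpace Ω} (μ : Measure Ω) [IsProbabilityMeasure μ]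
    (n n_c n_r : ℕ) (hcr : n_c + n_r ≤ n)
    (x : Fin n → Ω → Bool) (hmeas : ∀ i, Measurable (x i))
    (hind : iIndepFun (m := fun _ => ⊤) x μ)
    (R C : Finset (Fin n)) (hR : R.card = n_r) (hC : C.card = n_c) (hRC : Disjoint R C)
    (hr : ∀ i ∈ R, ∀ᵐ ω ∂μ, x i ω = false)
    (hc : ∀ i ∈ C, ∀ᵐ ω ∂μ, x i ω = true)
    (hf : ∀ i, i ∉ R → i ∉ C → μ {ω | x i ω = true} = 1 / 2) :
    ∫ ω, (∑ i : Fin n, ∑ j : Fin n, if x i ω ≠ x j ω then (1 : ℝ) else 0) ∂μ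
      = (((n : ℝ) - n_c - n_r) * ((n : ℝ) + n_c + n_r - 1) + 4 * n_c * n_r) / 2 :=
  stmt_11_general (m0 := m0) μ n n_c n_r x hmeas hind R C hR hC hRC hr hc hf
end
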